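/- Let A, M, W, Z, X be discrete with W ⊥ (A,Z) | (M,X) and positivity. Suppose for all w,x: Σ_z q_a(z,a',x)·p(z | w, a', x) = p(w|a,x)/p(w|a',x). Then for all w,x: Σ_m [p(m|a,x)/p(m|a',x)]·p(m | a', w, x) = p(w|a,x)/p(w|a',x). -/

import Mathlib

open Finset
open scoped Classical

noncomputable section

/-- Probability of an event under weights `mu`. -/
def pr {O : Type} [Fintype O] (mu : O -> Real) (s : O -> Prop) : Real :=
  Finset.univ.sum (fun w => if s w then mu w else 0)

/-- Conditional probability `P(s | t)`. -/
def cpr {O : Type} [Fintype O] (mu : O -> Real) (s t : O -> Prop) : Real :=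
  pr mu (fun w => s w /\ t w) / pr mu t

/-- Expectation of `f`. -/
def expec {O : Type} [Fintype O] (mu : O -> Real) (f : O -> Real) : Real :=
  Finset.univ.sum (fun w => f w * mu w)

/-- Conditional expectation `E[f | t]`. -/
def cexp {O : Type} [Fintype O] (mu : O -> Real) (f : O -> Real) (t : O -> Prop) : Real :=
  (Finset.univ.sum (fun w => if t w then f w * mu w else 0)) / pr mu t

/-! Bayes' rule and `W ⊥ A | (M, X)` turn the `m`-th summand into `P(w, m | a, x) / P(w | a', x)`;
summing over `m` gives `P(w | a, x) / P(w | a', x)`. -/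

section Events

variable {O : Type} [Fintype O] (mu : O → ℝ)

lemma pr_congr {s t : O → Prop} (h : ∀ o, s o ↔ t o) : pr mu s = pr mu t :=
  congrArg (pr mu) (funext fun o => propext (h o))

lemma pr_mono (hmu : ∀ o, 0 ≤ mu o) {s t : O → Prop} (h : ∀ o, s o → t o) :
    pr mu s ≤ pr mu t :=
  sum_le_sum fun o _ => by split_ifs <;> simp_all

lemma sum_pr_and_eq {T : Type} [Fintype T] (s : O → Prop) (f : O → T) :
    ∑ t, pr mu (fun o => s o ∧ f o = t) = pr mu s := by
  unfold pr
  rw [sum_comm]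
  refine sum_congr rfl fun o _ => ?_
  by_cases hs : s o <;> simp [hs]

lemma sum_cpr_and_eq {T : Type} [Fintype T] (s c : O → Prop) (f : O → T) :
    ∑ t, cpr mu (fun o => s o ∧ f o = t) c = cpr mu s c := by
  simp only [cpr, ← sum_div]
  rw [← sum_pr_and_eq mu (fun o => s o ∧ c o) f]
  exact congrArg (· / _) (sum_congr rfl fun t _ => pr_congr mu fun o => and_right_comm)

def IndepGiven (s t c : O → Prop) : Prop :=
  pr mu (fun o => s o ∧ t o ∧ c o) * pr mu c =
    pr mu (fun o => s o ∧ c o) * pr mu (fun o => t o ∧ c o)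

lemma indepGiven_of_forall_fiber {T : Type} [Fintype T] (f : O → T) {s t c : O → Prop}
    (h : ∀ z, IndepGiven mu s (fun o => t o ∧ f o = z) c) : IndepGiven mu s t c := by
  unfold IndepGiven
  rw [← sum_pr_and_eq mu (fun o => s o ∧ t o ∧ c o) f,
    ← sum_pr_and_eq mu (fun o => t o ∧ c o) f, sum_mul, mul_sum]
  refine sum_congr rfl fun z _ => ?_
  rw [pr_congr mu fun o => show (_ ∧ f o = z) ↔ s o ∧ (t o ∧ f o = z) ∧ c o by tauto,
    pr_congr mu fun o => show (_ ∧ f o = z) ↔ (t o ∧ f o = z) ∧ c o by tauto]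
  exact h z

lemma IndepGiven.cpr_eq {s t c : O → Prop} (h : IndepGiven mu s t c)
    (htc : pr mu (fun o => t o ∧ c o) ≠ 0) (hc : pr mu c ≠ 0) :
    cpr mu s (fun o => t o ∧ c o) = cpr mu s c :=
  (div_eq_div_iff htc hc).2 h

lemma cpr_ratio_mul_cpr_eq_of_indepGiven {TA TM TW TX : Type} (hmu : ∀ o, 0 ≤ mu o)
    (A : O → TA) (M : O → TM) (W : O → TW) (X : O → TX) (a a' : TA) (m : TM) (v : TW) (x : TX)
    (hpos : ∀ t, 0 < pr mu (fun o => M o = m ∧ W o = v ∧ A o = t ∧ X o = x))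
    (hCI : ∀ t, IndepGiven mu (fun o => W o = v) (fun o => A o = t) (fun o => M o = m ∧ X o = x)) :
    cpr mu (fun o => M o = m) (fun o => A o = a ∧ X o = x) /
        cpr mu (fun o => M o = m) (fun o => A o = a' ∧ X o = x) *
      cpr mu (fun o => M o = m) (fun o => A o = a' ∧ W o = v ∧ X o = x) =
    cpr mu (fun o => W o = v ∧ M o = m) (fun o => A o = a ∧ X o = x) /
      cpr mu (fun o => W o = v) (fun o => A o = a' ∧ X o = x) := by
  have hne : ∀ t {s : O → Prop}, (∀ o, M o = m ∧ W o = v ∧ A o = t ∧ X o = x → s o) →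
      pr mu s ≠ 0 := fun t _ h => ((hpos t).trans_le (pr_mono mu hmu h)).ne'
  have hmx : pr mu (fun o => M o = m ∧ X o = x) ≠ 0 := hne a (by tauto)
  have hw : cpr mu (fun o => W o = v) (fun o => A o = a' ∧ M o = m ∧ X o = x) =
      cpr mu (fun o => W o = v) (fun o => A o = a ∧ M o = m ∧ X o = x) :=
    ((hCI a').cpr_eq mu (hne a' (by tauto)) hmx).trans
      ((hCI a).cpr_eq mu (hne a (by tauto)) hmx).symm
  have hax : pr mu (fun o => A o = a ∧ X o = x) ≠ 0 := hne a (by tauto)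
  have hamx : pr mu (fun o => A o = a ∧ M o = m ∧ X o = x) ≠ 0 := hne a (by tauto)
  have ha'x : pr mu (fun o => A o = a' ∧ X o = x) ≠ 0 := hne a' (by tauto)
  have ha'wx : pr mu (fun o => A o = a' ∧ W o = v ∧ X o = x) ≠ 0 := hne a' (by tauto)
  simp only [cpr, and_assoc, and_comm, and_left_comm] at hw hax hamx ha'x ha'wx ⊢
  field_simp at hw ⊢
  exact hw

end Events

theorem stmt17_general
    {O TA TM TZ TW TX : Type}
    [Fintype O] [Fintype TM] [Fintype TZ]
    (mu : O -> Real) (hmu0 : forall o : O, 0 <= mu o)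
    (A : O -> TA) (M : O -> TM) (Z : O -> TZ) (W : O -> TW) (X : O -> TX)
    (a a' : TA)
    (hWA : forall (v : TW) (t : TA) (z : TZ) (m : TM) (x : TX),
      pr mu (fun o => W o = v /\ A o = t /\ Z o = z /\ M o = m /\ X o = x) *
        pr mu (fun o => M o = m /\ X o = x) =
      pr mu (fun o => W o = v /\ M o = m /\ X o = x) *
        pr mu (fun o => A o = t /\ Z o = z /\ M o = m /\ X o = x))
    (hpos : forall (m : TM) (v : TW) (t : TA) (x : TX),
      0 < pr mu (fun o => M o = m /\ W o = v /\ A o = t /\ X o = x)) :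
    forall (v : TW) (x : TX),
      Finset.univ.sum (fun m : TM =>
        (cpr mu (fun o => M o = m) (fun o => A o = a /\ X o = x) /
          cpr mu (fun o => M o = m) (fun o => A o = a' /\ X o = x)) *
        cpr mu (fun o => M o = m) (fun o => A o = a' /\ W o = v /\ X o = x)) =
      cpr mu (fun o => W o = v) (fun o => A o = a /\ X o = x) /
        cpr mu (fun o => W o = v) (fun o => A o = a' /\ X o = x) := by
  intro v x
  have hCI : ∀ m t, IndepGiven mu (fun o => W o = v) (fun o => A o = t)
      (fun o => M o = m ∧ X o = x) := fun m t =>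
    indepGiven_of_forall_fiber mu Z fun z => by
      simpa only [IndepGiven, and_assoc] using hWA v t z m x
  rw [sum_congr rfl fun m _ => cpr_ratio_mul_cpr_eq_of_indepGiven mu hmu0 A M W X a a' m v x
    (fun t => hpos m v t x) (hCI m), ← sum_div, sum_cpr_and_eq]

theorem stmt17
    {O TA TM TZ TW TX : Type}
    [Fintype O] [Fintype TA] [Fintype TM] [Fintype TZ] [Fintype TW] [Fintype TX]
    [DecidableEq TA] [DecidableEq TM] [DecidableEq TZ] [DecidableEq TW] [DecidableEq TX]
    (mu : O -> Real) (hmu0 : forall o : O, 0 <= mu o)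
    (hmu1 : Finset.univ.sum mu = 1)
    (A : O -> TA) (Y : O -> Real) (M : O -> TM) (Z : O -> TZ) (W : O -> TW) (X : O -> TX)
    (a a' : TA) (q : TZ -> TA -> TX -> Real)
    (hWA : forall (v : TW) (t : TA) (z : TZ) (m : TM) (x : TX),
      pr mu (fun o => W o = v /\ A o = t /\ Z o = z /\ M o = m /\ X o = x) *
        pr mu (fun o => M o = m /\ X o = x) =
      pr mu (fun o => W o = v /\ M o = m /\ X o = x) *
        pr mu (fun o => A o = t /\ Z o = z /\ M o = m /\ X o = x))
    (hpos : forall (m : TM) (v : TW) (t : TA) (x : TX),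
      0 < pr mu (fun o => M o = m /\ W o = v /\ A o = t /\ X o = x))
    (hq : forall (v : TW) (x : TX),
      Finset.univ.sum (fun z : TZ =>
        q z a' x * cpr mu (fun o => Z o = z) (fun o => W o = v /\ A o = a' /\ X o = x)) =
      cpr mu (fun o => W o = v) (fun o => A o = a /\ X o = x) /
        cpr mu (fun o => W o = v) (fun o => A o = a' /\ X o = x)) :
    forall (v : TW) (x : TX),
      Finset.univ.sum (fun m : TM =>
        (cpr mu (fun o => M o = m) (fun o => A o = a /\ X o = x) /
          cpr mu (fun o => M o = m) (fun o => A o = a' /\ X o = x)) *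
        cpr mu (fun o => M o = m) (fun o => A o = a' /\ W o = v /\ X o = x)) =
      cpr mu (fun o => W o = v) (fun o => A o = a /\ X o = x) /
        cpr mu (fun o => W o = v) (fun o => A o = a' /\ X o = x) :=
  stmt17_general mu hmu0 A M Z W X a a' hWA hpos
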